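/- For every real p with 0 < p < 1, the agreement complexity of ρ_disj satisfies agr_{ρ_disj}(p) ≤ 6 · p^{log_6 3}. -/

import Mathlib

open scoped BigOperators ENNReal

namespace SR

variable {U V X Y : Type*}

/-- `μ` is a probability distribution on a finite type. -/
def IsDist {α : Type*} [Fintype α] (μ : α → ℝ) : Prop :=
  (∀ a, 0 ≤ μ a) ∧ ∑ a, μ a = 1

/-- Expectation of `f` under `μ`. -/
def expect {α : Type*} [Fintype α] (μ : α → ℝ) (f : α → ℝ) : ℝ :=
  ∑ a, μ a * f a

/-- First (`U`-)marginal of a bipartite distribution. -/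
def margFst [Fintype V] (ρ : U × V → ℝ) : U → ℝ :=
  fun u => ∑ v, ρ (u, v)

/-- Second (`V`-)marginal of a bipartite distribution. -/
def margSnd [Fintype U] (ρ : U × V → ℝ) : V → ℝ :=
  fun v => ∑ u, ρ (u, v)

/-- Maximum correlation of a bipartite distribution (sSup of the empty set is 0). -/
noncomputable def cor [Fintype U] [Fintype V] (ρ : U × V → ℝ) : ℝ :=
  sSup { t : ℝ | ∃ (f : U → ℝ) (g : V → ℝ),
      expect (margFst ρ) f = 0 ∧ expect (margSnd ρ) g = 0 ∧
      expect (margFst ρ) (fun u => f u ^ 2) = 1 ∧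
      expect (margSnd ρ) (fun v => g v ^ 2) = 1 ∧
      t = ∑ x : U × V, ρ x * (f x.1 * g x.2) }

/-- Tensor product of two bipartite distributions. -/
def tensor (ρ : U × V → ℝ) (σ : X × Y → ℝ) : (U × X) × (V × Y) → ℝ :=
  fun p => ρ (p.1.1, p.2.1) * σ (p.1.2, p.2.2)

/-- Tensor product of a family of bipartite distributions. -/
def tensorPi {n : ℕ} {U V : Fin n → Type*} (ρ : ∀ i, U i × V i → ℝ) :
    (∀ i, U i) × (∀ i, V i) → ℝ :=
  fun p => ∏ i, ρ i (p.1 i, p.2 i)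

/-- The distribution of `ℓ` i.i.d. samples from a bipartite distribution `ρ`. -/
def iid (ρ : U × V → ℝ) (ℓ : ℕ) : (Fin ℓ → U) × (Fin ℓ → V) → ℝ :=
  fun p => ∏ i, ρ (p.1 i, p.2 i)

/-- Agreement complexity of `ρ` at success probability `p`. -/
noncomputable def agr [Fintype U] [Fintype V] (ρ : U × V → ℝ) (p : ℝ) : ℝ :=
  sInf { c : ℝ | ∃ (ℓ : ℕ) (f : (Fin ℓ → U) → ℝ) (g : (Fin ℓ → V) → ℝ),
      (∀ x, f x ∈ Set.Icc (0:ℝ) 1) ∧ (∀ y, g y ∈ Set.Icc (0:ℝ) 1) ∧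
      p ≤ (∑ x : (Fin ℓ → U) × (Fin ℓ → V), iid ρ ℓ x * (f x.1 * g x.2)) ∧
      c = (∑ x : (Fin ℓ → U) × (Fin ℓ → V), iid ρ ℓ x * f x.1)
        + (∑ x : (Fin ℓ → U) × (Fin ℓ → V), iid ρ ℓ x * g x.2) }

/-- There is a `p`-collision protocol for `ρ` with domain size `n` and output size at most `k`.
    The players may use private randomness (uniform over `Fin sA`, `Fin sB` weighted by
    distributions `μA`, `μB`, independent of everything else). -/
def ColLE [Fintype U] [Fintype V] (ρ : U × V → ℝ) (n : ℕ) (p : ℝ) (k : ℕ) : Prop :=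
  ∃ (ℓ sA sB : ℕ) (μA : Fin sA → ℝ) (μB : Fin sB → ℝ)
    (A : (Fin ℓ → U) → Fin sA → Finset (Fin n))
    (B : (Fin ℓ → V) → Fin sB → Finset (Fin n)),
    IsDist μA ∧ IsDist μB ∧
    (∀ i : Fin n, p ≤ ∑ x : (Fin ℓ → U) × (Fin ℓ → V), ∑ rA, ∑ rB,
        iid ρ ℓ x * (μA rA * μB rB) *
          (if i ∈ A x.1 rA ∧ i ∈ B x.2 rB then (1:ℝ) else 0)) ∧
    (∀ (x : (Fin ℓ → U) × (Fin ℓ → V)) (rA : Fin sA),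
        0 < iid ρ ℓ x → 0 < μA rA → (A x.1 rA).card ≤ k) ∧
    (∀ (x : (Fin ℓ → U) × (Fin ℓ → V)) (rB : Fin sB),
        0 < iid ρ ℓ x → 0 < μB rB → (B x.2 rB).card ≤ k)

/-- Collision complexity `col_ρ(n, p)`, valued in `ℕ∞` (`sInf ∅ = ⊤`). -/
noncomputable def col [Fintype U] [Fintype V] (ρ : U × V → ℝ) (n : ℕ) (p : ℝ) : ℕ∞ :=
  sInf { k : ℕ∞ | ∃ m : ℕ, k = (m : ℕ∞) ∧ ColLE ρ n p m }

/-- Base-2 Shannon entropy of a finitely supported distribution. -/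
noncomputable def ent2 {α : Type*} [Fintype α] (μ : α → ℝ) : ℝ :=
  ∑ a, -(μ a * Real.logb 2 (μ a))

open Classical in
/-- Probability of an event under `μ`. -/
noncomputable def prEvent {Ω : Type*} [Fintype Ω] (μ : Ω → ℝ) (P : Ω → Prop) : ℝ :=
  ∑ ω, if P ω then μ ω else 0

/-- The distribution of a random variable `Z` conditioned on an event `P`. -/
noncomputable def condDist {Ω α : Type*} [Fintype Ω] (μ : Ω → ℝ) (Z : Ω → α)
    (P : Ω → Prop) : α → ℝ :=
  fun a => prEvent μ (fun ω => Z ω = a ∧ P ω) / prEvent μ P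

/-- The `L^r(μ)`-norm of a complex-valued function on a finite probability space. -/
noncomputable def lnorm {α : Type*} [Fintype α] (μ : α → ℝ) (r : ℝ) (h : α → ℂ) : ℝ :=
  (∑ a, μ a * ‖h a‖ ^ r) ^ (1 / r)

/-- The conditional-expectation operator `T_ρ` of a bipartite distribution. -/
noncomputable def condOp [Fintype U] [Fintype V] (ρ : U × V → ℝ) (f : U → ℂ) : V → ℂ :=
  fun v => ∑ u, ((ρ (u, v) / margSnd ρ v : ℝ) : ℂ) * f u

/-- `ρ` is `q`-to-`p` hypercontractive. -/
def Hyper [Fintype U] [Fintype V] (ρ : U × V → ℝ) (q p : ℝ) : Prop :=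
  ∀ f : U → ℂ, lnorm (margSnd ρ) q (condOp ρ f) ≤ lnorm (margFst ρ) p f

/-- Inner product over 𝔽₂. -/
def ipF2 {m : ℕ} (u v : Fin m → ZMod 2) : ZMod 2 := ∑ i, u i * v i

/-- `σ_{m,b}`: uniform distribution on pairs `(u,v) ∈ 𝔽₂^m × 𝔽₂^m` with `u·v = b`. -/
noncomputable def sigmaIP (m : ℕ) (b : ZMod 2) :
    ((Fin m → ZMod 2) × (Fin m → ZMod 2)) → ℝ :=
  fun p => if ipF2 p.1 p.2 = b then
      (((Finset.univ.filter
        (fun q : (Fin m → ZMod 2) × (Fin m → ZMod 2) => ipF2 q.1 q.2 = b)).card : ℝ))⁻¹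
    else 0

/-- `ρ_disj`: uniform distribution on `{(0,0),(0,1),(1,0)} ⊆ {0,1} × {0,1}`
    (with `false = 0`, `true = 1`). -/
noncomputable def rhoDisj : Bool × Bool → ℝ :=
  fun x => if x = (true, true) then 0 else 1/3


/-!
Alice accepts only when all her `ℓ` coordinates are `1` (probability `3^(-ℓ)`); Bob accepts with
probability `p · 3^ℓ`, and only when all his coordinates are `0` (probability `(2/3)^ℓ`). Since
`(1, 0)` has mass `1/3`, the success probability is exactly `p` and the cost is
`(1 + p · 6^ℓ) / 3^ℓ`. Choosing `ℓ` with `6^(-ℓ-1) < p ≤ 6^(-ℓ)` puts `s = p · 6^ℓ` in `(1/6, 1]`,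
and then `1 + s ≤ 6 s^α` for `α = log₆ 3`, while `s^α / 3^ℓ = p^α` because `(6^ℓ)^α = 3^ℓ`.
-/

lemma iid_nonneg {ρ : U × V → ℝ} (hρ : ∀ x, 0 ≤ ρ x) (ℓ : ℕ) (x : (Fin ℓ → U) × (Fin ℓ → V)) :
    0 ≤ iid ρ ℓ x :=
  Finset.prod_nonneg fun _ _ => hρ _

section Protocol

variable [Fintype U] [Fintype V]

lemma sum_iid_mul_fst (ρ : U × V → ℝ) (ℓ : ℕ) (f : (Fin ℓ → U) → ℝ) :
    ∑ x : (Fin ℓ → U) × (Fin ℓ → V), iid ρ ℓ x * f x.1 =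
      ∑ u : Fin ℓ → U, (∏ i, margFst ρ (u i)) * f u := by
  simp only [Fintype.sum_prod_type, ← Finset.sum_mul, iid, margFst, Fintype.prod_sum]

lemma sum_iid_mul_snd (ρ : U × V → ℝ) (ℓ : ℕ) (g : (Fin ℓ → V) → ℝ) :
    ∑ x : (Fin ℓ → U) × (Fin ℓ → V), iid ρ ℓ x * g x.2 =
      ∑ v : Fin ℓ → V, (∏ i, margSnd ρ (v i)) * g v := by
  simp only [Fintype.sum_prod_type_right, ← Finset.sum_mul, iid, margSnd, Fintype.prod_sum]

lemma agr_le_of_protocol {ρ : U × V → ℝ} (hρ : ∀ x, 0 ≤ ρ x) {p : ℝ} (ℓ : ℕ)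
    (f : (Fin ℓ → U) → ℝ) (g : (Fin ℓ → V) → ℝ)
    (hf : ∀ x, f x ∈ Set.Icc (0:ℝ) 1) (hg : ∀ y, g y ∈ Set.Icc (0:ℝ) 1)
    (hp : p ≤ ∑ x : (Fin ℓ → U) × (Fin ℓ → V), iid ρ ℓ x * (f x.1 * g x.2)) :
    agr ρ p ≤ (∑ x : (Fin ℓ → U) × (Fin ℓ → V), iid ρ ℓ x * f x.1)
      + (∑ x : (Fin ℓ → U) × (Fin ℓ → V), iid ρ ℓ x * g x.2) := by
  refine csInf_le ⟨0, ?_⟩ ⟨ℓ, f, g, hf, hg, hp, rfl⟩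
  rintro c ⟨ℓ', f', g', hf', hg', -, rfl⟩
  exact add_nonneg
    (Finset.sum_nonneg fun x _ => mul_nonneg (iid_nonneg hρ ℓ' x) (hf' x.1).1)
    (Finset.sum_nonneg fun x _ => mul_nonneg (iid_nonneg hρ ℓ' x) (hg' x.2).1)

/-- The protocol in which Alice accepts exactly on the constant string `u` and Bob accepts the
constant string `v` with probability `p / ρ(u, v)^ℓ`. -/
lemma agr_le_of_atom {ρ : U × V → ℝ} (hρ : ∀ x, 0 ≤ ρ x) (u : U) (v : V) (ℓ : ℕ) {p : ℝ}
    (hp : 0 ≤ p) (hpρ : p ≤ ρ (u, v) ^ ℓ) :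
    agr ρ p ≤ margFst ρ u ^ ℓ + p / ρ (u, v) ^ ℓ * margSnd ρ v ^ ℓ := by
  classical
  set c := p / ρ (u, v) ^ ℓ
  have hc : c ∈ Set.Icc (0:ℝ) 1 :=
    ⟨div_nonneg hp (pow_nonneg (hρ _) _), div_le_one_of_le₀ hpρ (hp.trans hpρ)⟩
  let f : (Fin ℓ → U) → ℝ := fun x => if x = fun _ => u then 1 else 0
  let g : (Fin ℓ → V) → ℝ := fun y => if y = fun _ => v then c else 0
  have hsuccess : ∑ x : (Fin ℓ → U) × (Fin ℓ → V), iid ρ ℓ x * (f x.1 * g x.2)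
      = ρ (u, v) ^ ℓ * c := by
    rw [Fintype.sum_eq_single ((fun _ => u, fun _ => v) : (Fin ℓ → U) × (Fin ℓ → V))]
    · simp [f, g, iid]
    · rintro ⟨x, y⟩ hxy
      by_cases hx : x = fun _ => u
      · simp [f, g, hx, show y ≠ fun _ => v by rintro rfl; exact hxy (by rw [hx])]
      · simp [f, hx]
  have hp_le : p ≤ ρ (u, v) ^ ℓ * c := by
    rcases (pow_nonneg (hρ (u, v)) ℓ).eq_or_lt with hzero | hpos
    · rw [← hzero] at hpρ ⊢; simpa using hpρ
    · exact (mul_div_cancel₀ p hpos.ne').ge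
  have hcost := agr_le_of_protocol hρ ℓ f g
    (fun x => by by_cases hx : x = fun _ => u <;> simp [f, hx])
    (fun y => by by_cases hy : y = fun _ => v <;> simp [g, hy, hc.1, hc.2])
    (hsuccess ▸ hp_le)
  rw [sum_iid_mul_fst, sum_iid_mul_snd] at hcost
  simpa [f, g, mul_comm] using hcost

end Protocol

lemma agr_rhoDisj_le (ℓ : ℕ) {p : ℝ} (hp : 0 ≤ p) (hpℓ : p ≤ (3 ^ ℓ)⁻¹) :
    agr rhoDisj p ≤ (1 + p * 6 ^ ℓ) / 3 ^ ℓ := by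
  have hρ (x : Bool × Bool) : 0 ≤ rhoDisj x := by unfold rhoDisj; split_ifs <;> norm_num
  have hatom : rhoDisj (true, false) = 1 / 3 := by simp [rhoDisj]
  have hfst : margFst rhoDisj true = 1 / 3 := by simp [margFst, rhoDisj]
  have hsnd : margSnd rhoDisj false = 2 / 3 := by simp [margSnd, rhoDisj]; norm_num
  refine (agr_le_of_atom hρ true false ℓ hp (by simpa [hatom] using hpℓ)).trans_eq ?_
  rw [hatom, hfst, hsnd, div_pow, one_pow, div_pow,
    show (6:ℝ) ^ ℓ = 2 ^ ℓ * 3 ^ ℓ by rw [← mul_pow]; norm_num]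
  field_simp

lemma pow_rpow_logb {b x : ℝ} (hb : 0 < b) (hb₁ : b ≠ 1) (hx : 0 < x) (n : ℕ) :
    (b ^ n) ^ Real.logb b x = x ^ n := by
  rw [← Real.rpow_pow_comm hb.le, Real.rpow_logb hb hb₁ hx]

lemma one_add_le_six_mul_rpow_logb_six_three {s : ℝ} (hs₀ : 1 < 6 * s) (hs₁ : s ≤ 1) :
    1 + s ≤ 6 * s ^ Real.logb 6 3 := by
  have hs : 0 < s := by linarith
  have hα₁ : Real.logb 6 3 ≤ 1 := by
    rw [Real.logb_le_iff_le_rpow (by norm_num) (by norm_num)]; norm_num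
  have hlarge : 1 ≤ 3 * s ^ Real.logb 6 3 := by
    calc (1 : ℝ) = 3 * 6⁻¹ ^ Real.logb 6 3 := by
          rw [Real.inv_rpow (by norm_num), Real.rpow_logb (by norm_num) (by norm_num) (by norm_num)]
          norm_num
      _ ≤ 3 * s ^ Real.logb 6 3 := by
          gcongr
          · exact Real.logb_nonneg (by norm_num) (by norm_num)
          · linarith
  have hge : s ≤ s ^ Real.logb 6 3 := by
    simpa using Real.rpow_le_rpow_of_exponent_ge hs hs₁ hα₁
  linarith

theorem stmt18 (p : ℝ) (hp0 : 0 < p) (hp1 : p < 1) :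
    agr rhoDisj p ≤ 6 * p ^ Real.logb 6 3 := by
  obtain ⟨ℓ, hlow, hhigh⟩ :=
    exists_nat_pow_near_of_lt_one hp0 hp1.le (by norm_num : (0:ℝ) < 6⁻¹) (by norm_num)
  set s := p * 6 ^ ℓ
  have h6ℓ : (0:ℝ) < 6 ^ ℓ := by positivity
  have hs₁ : s ≤ 1 := by rwa [inv_pow, ← one_div, le_div_iff₀ h6ℓ] at hhigh
  have hs₀ : 1 < 6 * s := by
    calc (1:ℝ) < p * 6 ^ (ℓ + 1) := by rwa [inv_pow, inv_lt_iff_one_lt_mul₀ (by positivity)] at hlow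
      _ = 6 * s := by ring
  have hp3 : p ≤ (3 ^ ℓ)⁻¹ := by
    refine hhigh.trans ?_
    rw [inv_pow]; gcongr; norm_num
  calc agr rhoDisj p ≤ (1 + s) / 3 ^ ℓ := agr_rhoDisj_le ℓ hp0.le hp3
    _ ≤ 6 * s ^ Real.logb 6 3 / 3 ^ ℓ := by
        gcongr; exact one_add_le_six_mul_rpow_logb_six_three hs₀ hs₁
    _ = 6 * p ^ Real.logb 6 3 := by
        rw [Real.mul_rpow hp0.le h6ℓ.le, pow_rpow_logb (by norm_num) (by norm_num) (by norm_num)]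
        field_simp

end SR
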